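/- arXiv:2601.04670 — 3 statements merged into one kernel-verified Lean document; each statement's English description precedes it below -/
import Mathlib

section
/- (Proposition 2 of the paper, combined form) Let p, q ∈ ℝ^V be probability vectors with q_k < 1, let c > 0, let T = I_V - 1 pᵀ, and let d = e_k - q. Then the unique maximizing index of the vector u = c · T d is k; that is, u_k > u_v for all v ≠ k with q_v > 0, and u_k ≥ u_v for all v. -/
/-- Proposition 2, combined form: for probability vectors `p, q`
with `q k < 1`, `c > 0`, `d = e_k - q` and `u = c • T d` where
`(T a) v = a v - ⟨p, a⟩`, the index `k` maximizes `u`, strictly over every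
`v ≠ k` with `q v > 0`. -/
theorem stmt_3 (V : ℕ) (hV : 1 ≤ V) (p q : Fin V → ℝ)
    (hp : ∀ v, 0 ≤ p v) (hpsum : ∑ v, p v = 1)
    (hq : ∀ v, 0 ≤ q v) (hqsum : ∑ v, q v = 1)
    (k : Fin V) (hqk : q k < 1) (c : ℝ) (hc : 0 < c)
    (d u : Fin V → ℝ)
    (hd : ∀ v, d v = (if v = k then (1 : ℝ) else 0) - q v)
    (hu : ∀ v, u v = c * (d v - ∑ w, p w * d w)) :
    (∀ v, v ≠ k → 0 < q v → u v < u k) ∧ (∀ v, u v ≤ u k) := by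
  have hdk : d k = 1 - q k := by simp [hd k]
  constructor
  · intro v hv hqv
    rw [hu v, hu k]
    have hdv : d v = -q v := by simp [hd v, hv]
    have : d v < d k := by rw [hdv, hdk]; linarith
    nlinarith
  · intro v
    rw [hu v, hu k]
    rcases eq_or_ne v k with rfl | hv
    · rfl
    · have hdv : d v = -q v := by simp [hd v, hv]
      have : d v ≤ d k := by rw [hdv, hdk]; have := hq v; linarith
      nlinarith
end

section
/- Entropy strictly decreases under temperature sharpening of a non-uniform softmax distribution: if π = softmax(f) for f ∈ ℝ^V not constant, and π^{(β)} = softmax(β f) for β > 1, then the Shannon entropy H(π^{(β)}) < H(π). -/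
/-- softmax on `Fin V`. -/
noncomputable def softmax {V : ℕ} (f : Fin V → ℝ) : Fin V → ℝ :=
  fun v => Real.exp (f v) / ∑ w, Real.exp (f w)

/-- Shannon entropy of a vector on `Fin V`. -/
noncomputable def shannonEntropy {V : ℕ} (p : Fin V → ℝ) : ℝ :=
  -∑ v, p v * Real.log (p v)

/-!
With `Z_g = ∑ exp g`, one has `log (softmax g) = g - log Z_g`, so for `p = softmax f` and
`q = softmax (β f)` every entropy and cross-entropy between `p` and `q` is affine in the means
`a = 𝔼_p f` and `b = 𝔼_q f`. Gibbs' inequality in both directions, strict in one since `p ≠ q`,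
gives `(β - 1) a < (β - 1) b`, hence `a < b`, and then
`H(q) < log Z_f - b < log Z_f - a = H(p)`.
-/

open Finset Real

theorem mul_log_sub_log_le_sub {x y : ℝ} (hx : 0 < x) (hy : 0 < y) :
    y * log x - y * log y ≤ x - y := by
  have h := mul_le_mul_of_nonneg_left (log_le_sub_one_of_pos (div_pos hx hy)) hy.le
  rwa [log_div hx.ne' hy.ne', mul_sub, mul_sub, mul_one, mul_div_cancel₀ _ hy.ne'] at h

theorem mul_log_sub_log_lt_sub {x y : ℝ} (hx : 0 < x) (hy : 0 < y) (hxy : x ≠ y) :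
    y * log x - y * log y < x - y := by
  have hne : x / y ≠ 1 := fun h => hxy ((div_eq_one_iff_eq hy.ne').mp h)
  have h := mul_lt_mul_of_pos_left (log_lt_sub_one_of_pos (div_pos hx hy) hne) hy
  rwa [log_div hx.ne' hy.ne', mul_sub, mul_sub, mul_one, mul_div_cancel₀ _ hy.ne'] at h

section Gibbs

variable {ι : Type*} [Fintype ι] {p q : ι → ℝ}

theorem sum_mul_log_le_sum_mul_log (hp : ∀ i, 0 < p i) (hq : ∀ i, 0 < q i)
    (hpq : ∑ i, p i = ∑ i, q i) : ∑ i, q i * log (p i) ≤ ∑ i, q i * log (q i) := by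
  have h : ∑ i, (q i * log (p i) - q i * log (q i)) ≤ ∑ i, (p i - q i) :=
    sum_le_sum fun i _ => mul_log_sub_log_le_sub (hp i) (hq i)
  rw [sum_sub_distrib, sum_sub_distrib] at h
  linarith

theorem sum_mul_log_lt_sum_mul_log (hp : ∀ i, 0 < p i) (hq : ∀ i, 0 < q i)
    (hpq : ∑ i, p i = ∑ i, q i) (hne : p ≠ q) :
    ∑ i, q i * log (p i) < ∑ i, q i * log (q i) := by
  obtain ⟨j, hj⟩ := Function.ne_iff.mp hne
  have h : ∑ i, (q i * log (p i) - q i * log (q i)) < ∑ i, (p i - q i) :=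
    sum_lt_sum (fun i _ => mul_log_sub_log_le_sub (hp i) (hq i))
      ⟨j, mem_univ j, mul_log_sub_log_lt_sub (hp j) (hq j) hj⟩
  rw [sum_sub_distrib, sum_sub_distrib] at h
  linarith

end Gibbs

section Softmax

variable {V : ℕ} [Nonempty (Fin V)] (f : Fin V → ℝ)

theorem sum_exp_pos : 0 < ∑ w, exp (f w) :=
  sum_pos (fun w _ => exp_pos (f w)) univ_nonempty

theorem softmax_pos (v : Fin V) : 0 < softmax f v :=
  div_pos (exp_pos _) (sum_exp_pos f)

theorem sum_softmax : ∑ v, softmax f v = 1 := by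
  simp only [softmax, ← sum_div, div_self (sum_exp_pos f).ne']

theorem log_softmax (v : Fin V) : log (softmax f v) = f v - log (∑ w, exp (f w)) := by
  rw [softmax, log_div (exp_ne_zero _) (sum_exp_pos f).ne', log_exp]

theorem sum_mul_log_softmax {q : Fin V → ℝ} (hq : ∑ v, q v = 1) :
    ∑ v, q v * log (softmax f v) = ∑ v, q v * f v - log (∑ w, exp (f w)) := by
  simp only [log_softmax, mul_sub, sum_sub_distrib, ← sum_mul, hq, one_mul]

theorem softmax_const_mul_ne {β : ℝ} (hβ : β ≠ 1) (hf : ∃ v w, f v ≠ f w) :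
    softmax f ≠ softmax (fun v => β * f v) := by
  obtain ⟨v, w, hvw⟩ := hf
  intro h
  have hlog : ∀ u, f u - log (∑ w, exp (f w)) = β * f u - log (∑ w, exp (β * f w)) := by
    intro u
    rw [← log_softmax, ← log_softmax (fun v => β * f v), h]
  have hprod : (β - 1) * (f v - f w) = 0 := by linarith [hlog v, hlog w]
  rcases mul_eq_zero.mp hprod with h1 | h2
  · exact hβ (by linarith)
  · exact hvw (by linarith)

end Softmax

theorem stmt_16_general (V : ℕ) (f : Fin V → ℝ)
    (hf : ∃ v w : Fin V, f v ≠ f w) (β : ℝ) (hβ : 1 < β) :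
    shannonEntropy (softmax (fun v => β * f v)) < shannonEntropy (softmax f) := by
  have : Nonempty (Fin V) := let ⟨v, _⟩ := hf; ⟨v⟩
  set p := softmax f
  set q := softmax (fun v => β * f v)
  have hq_log_p := sum_mul_log_softmax f (sum_softmax (fun v => β * f v))
  have hp_log_q := sum_mul_log_softmax (fun v => β * f v) (sum_softmax f)
  have hp_log_p := sum_mul_log_softmax f (sum_softmax f)
  have hq_log_q := sum_mul_log_softmax (fun v => β * f v) (sum_softmax (fun v => β * f v))
  simp only [mul_left_comm _ β, ← mul_sum] at hp_log_q hq_log_q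
  have hpq : ∑ v, p v = ∑ v, q v := by rw [sum_softmax, sum_softmax]
  have gibbs_q := sum_mul_log_lt_sum_mul_log (softmax_pos f) (softmax_pos _) hpq
    (softmax_const_mul_ne f hβ.ne' hf)
  have gibbs_p := sum_mul_log_le_sum_mul_log (softmax_pos _) (softmax_pos f) hpq.symm
  have hmean : ∑ v, p v * f v < ∑ v, q v * f v :=
    lt_of_mul_lt_mul_left (by linarith) (sub_pos.mpr hβ).le
  rw [shannonEntropy, shannonEntropy, neg_lt_neg_iff]
  linarith

/-- entropy strictly decreases under temperature sharpening of a
non-uniform softmax distribution: if `f` is not constant and `β > 1`, then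
`H(softmax (β • f)) < H(softmax f)`. -/
theorem stmt_16 (V : ℕ) (hV : 1 ≤ V) (f : Fin V → ℝ)
    (hf : ∃ v w : Fin V, f v ≠ f w) (β : ℝ) (hβ : 1 < β) :
    shannonEntropy (softmax (fun v => β * f v)) < shannonEntropy (softmax f) :=
  stmt_16_general V f hf β hβ
end

section
/- Adding a positive multiple of (e_k - π) to logits increases the probability of class k: if f' = f + η(e_k - π) with π = softmax(f) and η > 0, then softmax(f')_k > π_k, provided 0 < π_k < 1. -/
/-- adding a positive multiple of `e_k - π` to the logits strictly
increases the probability of class `k`, provided `0 < π k < 1`. -/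
theorem stmt_17 (V : ℕ) (hV : 1 ≤ V) (f : Fin V → ℝ) (k : Fin V)
    (η : ℝ) (hη : 0 < η)
    (hk0 : 0 < softmax f k) (hk1 : softmax f k < 1) :
    softmax f k <
      softmax (fun v => f v + η * ((if v = k then (1 : ℝ) else 0) - softmax f v)) k := by
  have hS : (0:ℝ) < ∑ w, Real.exp (f w) :=
    Finset.sum_pos (fun w _ => Real.exp_pos _) ⟨k, Finset.mem_univ k⟩
  set S : ℝ := ∑ w, Real.exp (f w) with hSdef
  have hπnonneg : ∀ v, 0 ≤ softmax f v := fun v =>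
    div_nonneg (Real.exp_pos _).le hS.le
  set g : Fin V → ℝ :=
    fun v => Real.exp (η * ((if v = k then (1:ℝ) else 0) - softmax f v)) with hg
  have hexp' : ∀ v,
      Real.exp (f v + η * ((if v = k then (1:ℝ) else 0) - softmax f v))
        = Real.exp (f v) * g v := fun v => Real.exp_add _ _
  have hgk : ∀ v, v ≠ k → g v < g k := by
    intro v hv
    apply Real.exp_lt_exp.2
    have h1 : (if v = k then (1:ℝ) else 0) = 0 := by simp [hv]
    have h2 : (if k = k then (1:ℝ) else 0) = 1 := by simp
    rw [h1, h2]
    apply mul_lt_mul_of_pos_left _ hη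
    have := hπnonneg v
    linarith
  -- there exists v ≠ k
  have hne : (Finset.univ.erase k).Nonempty := by
    rcases Finset.eq_empty_or_nonempty (Finset.univ.erase k) with h | h
    · exfalso
      have huniv : (Finset.univ : Finset (Fin V)) = {k} := by
        have := Finset.insert_erase (Finset.mem_univ k)
        rw [h] at this
        simpa using this.symm
      have : S = Real.exp (f k) := by rw [hSdef, huniv, Finset.sum_singleton]
      have : softmax f k = 1 := by
        show Real.exp (f k) / S = 1
        rw [this]; exact div_self (Real.exp_ne_zero _)
      linarith
    · exact h
  obtain ⟨v, hv⟩ := hne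
  have hvk : v ≠ k := Finset.ne_of_mem_erase hv
  have hS' : (0:ℝ) <
      ∑ w, Real.exp (f w + η * ((if w = k then (1:ℝ) else 0) - softmax f w)) :=
    Finset.sum_pos (fun w _ => Real.exp_pos _) ⟨k, Finset.mem_univ k⟩
  show Real.exp (f k) / S <
    Real.exp (f k + η * ((if k = k then (1:ℝ) else 0) - softmax f k)) /
      ∑ w, Real.exp (f w + η * ((if w = k then (1:ℝ) else 0) - softmax f w))
  rw [div_lt_div_iff₀ hS hS']
  have hsum : (∑ w, Real.exp (f w + η * ((if w = k then (1:ℝ) else 0) - softmax f w)))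
      = ∑ w, Real.exp (f w) * g w := Finset.sum_congr rfl (fun w _ => hexp' w)
  rw [hexp' k, hsum]
  have key : ∑ w, Real.exp (f w) * g w < ∑ w, Real.exp (f w) * g k := by
    apply Finset.sum_lt_sum
    · intro i _
      rcases eq_or_ne i k with rfl | hik
      · exact le_refl _
      · exact mul_le_mul_of_nonneg_left (hgk i hik).le (Real.exp_pos _).le
    · exact ⟨v, Finset.mem_univ v,
        mul_lt_mul_of_pos_left (hgk v hvk) (Real.exp_pos _)⟩
  have h := mul_lt_mul_of_pos_left key (Real.exp_pos (f k))
  rw [← Finset.sum_mul] at h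
  have h2 : Real.exp (f k) * g k * S = Real.exp (f k) * ((∑ w, Real.exp (f w)) * g k) := by
    rw [hSdef]; ring
  rw [h2]
  exact h
end
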